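/- arXiv:2310.19584 — 10 statements merged into one kernel-verified Lean document; each statement's English description precedes it below -/
import Mathlib

section
/- The polynomial H1(w0,w1,w2,w3) = w1*w2*(w2*w3 + w0*w1 - w0*w3 + (w1+w2)^2 + ν*(w1+w2) + b) + a*(w1+w2) is invariant under the map (P.iv), i.e. H1(w1,w2,w3,w4) = H1(w0,w1,w2,w3) whenever w4*w3*w2 + w2*w1*w0 + 2*w2^2*(w3+w1) + w2^3 + w2*(w3^2 + w3*w1 + w1^2) + ν*w2*(w3+w2+w1) + b*w2 + a = 0. -/
noncomputable def H1iv (a b nu w0 w1 w2 w3 : ℝ) : ℝ :=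
  w1*w2*(w2*w3 + w0*w1 - w0*w3 + (w1+w2)^2 + nu*(w1+w2) + b) + a*(w1+w2)

theorem stmt0 (a b nu w0 w1 w2 w3 w4 : ℝ) (h2 : w2 ≠ 0) (h3 : w3 ≠ 0)
    (hrel : w4*w3*w2 + w2*w1*w0 + 2*w2^2*(w3+w1) + w2^3 + w2*(w3^2 + w3*w1 + w1^2) + nu*w2*(w3+w2+w1) + b*w2 + a = 0) :
    H1iv a b nu w1 w2 w3 w4 = H1iv a b nu w0 w1 w2 w3 := by
  unfold H1iv
  linear_combination (w3 - w1) * hrel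
end

section
/- The polynomial H2(w0,w1,w2,w3) = w1*w2*( w0^2*w1 + w3^2*w2 + w0*w3*(w1+w2) + w0*(w2^2+2*w1^2) + w3*(w1^2+2*w2^2) + 3*(w0+w3)*w1*w2 + (w1+w2)^3 + ν*(w0*w3 + (w0+w3)*(w1+w2) + (w1+w2)^2) + b*(w0+w1+w2+w3) ) + a*(w0*w1 + w3*w2 + (w1+w2)^2) is invariant under the map (P.iv): H2(w1,w2,w3,w4) = H2(w0,w1,w2,w3) whenever w4 satisfies the defining relation of (P.iv). -/
noncomputable def H2iv (a b nu w0 w1 w2 w3 : ℝ) : ℝ :=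
  w1*w2*( w0^2*w1 + w3^2*w2 + w0*w3*(w1+w2) + w0*(w2^2+2*w1^2) + w3*(w1^2+2*w2^2) + 3*(w0+w3)*w1*w2 + (w1+w2)^3 + nu*(w0*w3 + (w0+w3)*(w1+w2) + (w1+w2)^2) + b*(w0+w1+w2+w3) ) + a*(w0*w1 + w3*w2 + (w1+w2)^2)

theorem stmt1 (a b nu w0 w1 w2 w3 w4 : ℝ) (h2 : w2 ≠ 0) (h3 : w3 ≠ 0)
    (hrel : w4*w3*w2 + w2*w1*w0 + 2*w2^2*(w3+w1) + w2^3 + w2*(w3^2 + w3*w1 + w1^2) + nu*w2*(w3+w2+w1) + b*w2 + a = 0) :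
    H2iv a b nu w1 w2 w3 w4 = H2iv a b nu w0 w1 w2 w3 := by
  have hw4 : w4 = -(w2*w1*w0 + 2*w2^2*(w3+w1) + w2^3 + w2*(w3^2 + w3*w1 + w1^2) + nu*w2*(w3+w2+w1) + b*w2 + a) / (w3*w2) := by
    field_simp
    linarith [hrel]
  subst hw4
  unfold H2iv
  field_simp
  ring
end

section
/- The polynomial H1(w0,w1,w2,w3) = w3*w2^3*w1^2 + w2^2*w1^3*w0 - w3*w2^2*w1^2*w0 + w2^3*w1^3 + ν̃*w2^2*w1^2 + c̃*w2*w1 + ã*(w2+w1) is invariant under the map (P.v): H1(w1,w2,w3,w4) = H1(w0,w1,w2,w3) whenever w4*w3^2*w2^2 + w2^2*w1^2*w0 + w2^3*(w1+w3)^2 + ν̃*w2^2*(w1+w3) + c̃*w2 + ã = 0. -/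
noncomputable def H1v (a c nu w0 w1 w2 w3 : ℝ) : ℝ :=
  w3*w2^3*w1^2 + w2^2*w1^3*w0 - w3*w2^2*w1^2*w0 + w2^3*w1^3 + nu*w2^2*w1^2 + c*w2*w1 + a*(w2+w1)

theorem stmt4 (a c nu w0 w1 w2 w3 w4 : ℝ) (h2 : w2 ≠ 0) (h3 : w3 ≠ 0)
    (hrel : w4*w3^2*w2^2 + w2^2*w1^2*w0 + w2^3*(w1+w3)^2 + nu*w2^2*(w1+w3) + c*w2 + a = 0) :
    H1v a c nu w1 w2 w3 w4 = H1v a c nu w0 w1 w2 w3 := by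
  unfold H1v
  linear_combination (w3 - w1) * hrel
end

section
/- The polynomial H2(w0,w1,w2,w3) = w2^2*w1^2*((w3*w2+w1*w0+w2*w1)^2 + ν̃*(w3+w1)*(w2+w0)) + c̃*w2*w1*(w3*w2+w1*w0+w2*w1) + ã*(w3*w2^2 + w1^2*w0 + w2^2*w1 + w2*w1^2) is invariant under the map (P.v). -/
noncomputable def H2v (a c nu w0 w1 w2 w3 : ℝ) : ℝ :=
  w2^2*w1^2*((w3*w2+w1*w0+w2*w1)^2 + nu*(w3+w1)*(w2+w0)) + c*w2*w1*(w3*w2+w1*w0+w2*w1) + a*(w3*w2^2 + w1^2*w0 + w2^2*w1 + w2*w1^2)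

theorem stmt5 (a c nu w0 w1 w2 w3 w4 : ℝ) (h2 : w2 ≠ 0) (h3 : w3 ≠ 0)
    (hrel : w4*w3^2*w2^2 + w2^2*w1^2*w0 + w2^3*(w1+w3)^2 + nu*w2^2*(w1+w3) + c*w2 + a = 0) :
    H2v a c nu w1 w2 w3 w4 = H2v a c nu w0 w1 w2 w3 := by
  have hw4 : w4 = -(w2^2*w1^2*w0 + w2^3*(w1+w3)^2 + nu*w2^2*(w1+w3) + c*w2 + a) / (w3^2*w2^2) := by
    field_simp
    linarith [hrel]
  subst hw4
  unfold H2v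
  field_simp
  ring
end

section
/- Miura map from (P.v) to (P.iv): Let (w_n) be a sequence satisfying the (P.v) recurrence w_{n+4}*w_{n+3}^2*w_{n+2}^2 + w_{n+2}^2*w_{n+1}^2*w_n + w_{n+2}^3*(w_{n+1}+w_{n+3})^2 + ν̃*w_{n+2}^2*(w_{n+1}+w_{n+3}) + c̃*w_{n+2} + ã = 0 with all w_n ≠ 0, and let h̃1 be the (constant) value of the invariant H1 along the orbit. Then ŵ_n := w_{n+1}*w_n satisfies the (P.iv) recurrence with parameters ν = ν̃, b = c̃, a = h̃1. -/
theorem stmt8 (a c nu h1 : ℝ) (w : ℕ → ℝ)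
    (hnz : ∀ n, w n ≠ 0)
    (hrec : ∀ n, w (n+4) * (w (n+3))^2 * (w (n+2))^2 + (w (n+2))^2 * (w (n+1))^2 * w n + (w (n+2))^3 * (w (n+1) + w (n+3))^2 + nu * (w (n+2))^2 * (w (n+1) + w (n+3)) + c * w (n+2) + a = 0)
    (hH1 : ∀ n, H1v a c nu (w n) (w (n+1)) (w (n+2)) (w (n+3)) = h1) :
    ∀ n, ((fun m => w (m+1) * w m) (n+4) * (fun m => w (m+1) * w m) (n+3) * (fun m => w (m+1) * w m) (n+2) + (fun m => w (m+1) * w m) (n+2) * (fun m => w (m+1) * w m) (n+1) * (fun m => w (m+1) * w m) n + 2 * ((fun m => w (m+1) * w m) (n+2))^2 * ((fun m => w (m+1) * w m) (n+3) + (fun m => w (m+1) * w m) (n+1)) + ((fun m => w (m+1) * w m) (n+2))^3 + (fun m => w (m+1) * w m) (n+2) * (((fun m => w (m+1) * w m) (n+3))^2 + (fun m => w (m+1) * w m) (n+3) * (fun m => w (m+1) * w m) (n+1) + ((fun m => w (m+1) * w m) (n+1))^2) + nu * (fun m => w (m+1) * w m) (n+2) * ((fun m => w (m+1) * w m) (n+3)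 + (fun m => w (m+1) * w m) (n+2) + (fun m => w (m+1) * w m) (n+1)) + c * (fun m => w (m+1) * w m) (n+2) + h1 = 0) := by
  intro n
  have h0 := hrec n
  have h1' := hrec (n+1)
  have hH := hH1 (n+1)
  simp only []
  unfold H1v at hH
  linear_combination (w (n+3)) * h0 + (w (n+2)) * h1' - hH
end

section
/- Under the Miura map ŵ_n = w_{n+1}*w_n from a solution of (P.v) with invariant values H1 = h̃1, H2 = h̃2, the value of the (P.iv) invariant H1^{(iv)} on (ŵ_0,ŵ_1,ŵ_2,ŵ_3) equals h̃2, where the (P.iv) parameters are ν = ν̃, b = c̃, a = h̃1. -/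
theorem stmt9 (a c nu h1 h2 : ℝ) (w : ℕ → ℝ)
    (hnz : ∀ n, w n ≠ 0)
    (hrec : ∀ n, w (n+4) * (w (n+3))^2 * (w (n+2))^2 + (w (n+2))^2 * (w (n+1))^2 * w n + (w (n+2))^3 * (w (n+1) + w (n+3))^2 + nu * (w (n+2))^2 * (w (n+1) + w (n+3)) + c * w (n+2) + a = 0)
    (hH1 : ∀ n, H1v a c nu (w n) (w (n+1)) (w (n+2)) (w (n+3)) = h1)
    (hH2 : ∀ n, H2v a c nu (w n) (w (n+1)) (w (n+2)) (w (n+3)) = h2) :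
    H1iv h1 c nu (w 1 * w 0) (w 2 * w 1) (w 3 * w 2) (w 4 * w 3) = h2 := by
  have h0 := hrec 0
  have e1 := hH1 0
  have e2 := hH2 0
  norm_num at h0 e1 e2
  simp only [H1v, H2v] at e1 e2
  simp only [H1iv]
  linear_combination (w 1 * (w 3 * w 2 - w 1 * w 0)) * h0 -
    (w 2 * w 1 + w 3 * w 2) * e1 + e2
end

section
/- Under the Miura map ŵ_n = w_{n+1}*w_n from a solution of (P.v) with invariant values h̃1, h̃2, the value of the (P.iv) second invariant H2^{(iv)} on (ŵ_0,ŵ_1,ŵ_2,ŵ_3) equals −ã^2 − ν̃*h̃2 − c̃*h̃1, where the (P.iv) parameters are ν = ν̃, b = c̃, a = h̃1. -/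
theorem stmt10 (a c nu h1 h2 : ℝ) (w : ℕ → ℝ)
    (hnz : ∀ n, w n ≠ 0)
    (hrec : ∀ n, w (n+4) * (w (n+3))^2 * (w (n+2))^2 + (w (n+2))^2 * (w (n+1))^2 * w n + (w (n+2))^3 * (w (n+1) + w (n+3))^2 + nu * (w (n+2))^2 * (w (n+1) + w (n+3)) + c * w (n+2) + a = 0)
    (hH1 : ∀ n, H1v a c nu (w n) (w (n+1)) (w (n+2)) (w (n+3)) = h1)
    (hH2 : ∀ n, H2v a c nu (w n) (w (n+1)) (w (n+2)) (w (n+3)) = h2) :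
    H2iv h1 c nu (w 1 * w 0) (w 2 * w 1) (w 3 * w 2) (w 4 * w 3)
      = -a^2 - nu * h2 - c * h1 := by
  have h0 := hnz 0
  have h1' := hnz 1
  have h2' := hnz 2
  have h3' := hnz 3
  have hw4 : w 4 = (-((w 2)^2 * (w 1)^2 * w 0 + (w 2)^3 * (w 1 + w 3)^2
      + nu * (w 2)^2 * (w 1 + w 3) + c * w 2 + a)) / ((w 3)^2 * (w 2)^2) := by
    have h := hrec 0
    field_simp
    linarith
  rw [← hH1 0, ← hH2 0, hw4]
  simp only [H1v, H2v, H2iv]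
  field_simp
  ring
end

section
/- Somos-8 relation for tau functions of (P.v): Let (τ_n) be a sequence with τ_n ≠ 0 for all n, and define w_n = τ_n*τ_{n+2}/τ_{n+1}^2. Suppose (w_n) satisfies the (P.v) recurrence with parameters ã, c̃, ν̃, and let h1, h2 be the values of its two invariants H1, H2. Then τ satisfies α1*τ_{n+8}*τ_n + α2*τ_{n+7}*τ_{n+1} + α3*τ_{n+6}*τ_{n+2} + α4*τ_{n+5}*τ_{n+3} + α5*τ_{n+4}^2 = 0, where α1 = h1, α2 = ã*h2, α3 = ã^2*h2 − h1^3, α4 = ã*(h2^2 + ν̃*h1*h2 + c̃*h1^2 + ã^2*h1), α5 = −h1*(h2^2 + ν̃*h1*h2 + c̃*h1^2 + ã^2*h1). -/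
private lemma key (a c nu h1 h2 x0 x1 x2 x3 x4 x5 x6 : ℝ)
    (hE0 : x4*x3^2*x2^2 + x2^2*x1^2*x0 + x2^3*(x1+x3)^2 + nu*x2^2*(x1+x3) + c*x2 + a = 0)
    (hE1 : x5*x4^2*x3^2 + x3^2*x2^2*x1 + x3^3*(x2+x4)^2 + nu*x3^2*(x2+x4) + c*x3 + a = 0)
    (hE2 : x6*x5^2*x4^2 + x4^2*x3^2*x2 + x4^3*(x3+x5)^2 + nu*x4^2*(x3+x5) + c*x4 + a = 0)
    (hh1 : H1v a c nu x0 x1 x2 x3 = h1)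
    (hh2 : H2v a c nu x0 x1 x2 x3 = h2) :
    h1*(x3^4*x4^3*x2^3*x5^2*x1^2*x6*x0)
      + a*h2*(x3^3*x4^2*x2^2*x5*x1)
      + (a^2*h2 - h1^3)*(x3^2*x4*x2)
      + a*(h2^2 + nu*h1*h2 + c*h1^2 + a^2*h1)*x3
      - h1*(h2^2 + nu*h1*h2 + c*h1^2 + a^2*h1) = 0 := by
  subst hh1 hh2
  simp only [H1v, H2v]
  linear_combination (norm := ring1)
    (- x1^6*x2^8*x3^3 - 3*x1^7*x2^8*x3^2 - 3*x1^8*x2^8*x3 - x1^9*x2^8 - x0*x1^4*x2^5*x3^5*x4^2 - 3*x0*x1^4*x2^6*x3^5*x4 - x0*x1^4*x2^7*x3^5 - x0*x1^5*x2^5*x3^4*x4^2 - x0*x1^5*x2^6*x3^4*x4 - x0*x1^5*x2^7*x3^4 + 3*x0*x1^6*x2^6*x3^3*x4 + x0*x1^6*x2^7*x3^3 + x0*x1^7*x2^6*x3^2*x4 - 3*x0*x1^7*x2^7*x3^2 - 8*x0*x1^8*x2^7*x3 - 4*x0*x1^9*x2^7 + x0^2*x1^4*x2^4*x3^5*x4^2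 + 3*x0^2*x1^4*x2^5*x3^5*x4 + x0^2*x1^4*x2^6*x3^5 - x0^2*x1^5*x2^4*x3^4*x4^2 - 5*x0^2*x1^5*x2^5*x3^4*x4 - x0^2*x1^5*x2^6*x3^4 + 2*x0^2*x1^6*x2^5*x3^3*x4 + x0^2*x1^6*x2^6*x3^3 + 2*x0^2*x1^7*x2^5*x3^2*x4 + 3*x0^2*x1^7*x2^6*x3^2 - 6*x0^2*x1^8*x2^6*x3 - 6*x0^2*x1^9*x2^6 - x0^3*x1^6*x2^4*x3^3*x4 - x0^3*x1^6*x2^5*x3^3 + x0^3*x1^7*x2^4*x3^2*x4 + 3*x0^3*x1^7*x2^5*x3^2 - 4*x0^3*x1^9*x2^5 + x0^4*x1^8*x2^4*x3 - x0^4*x1^9*x2^4 - 3*nu*x1^6*x2^7*x3^2 - 6*nu*x1^7*x2^7*x3 - 3*nu*x1^8*x2^7 - nu*x0*x1^4*x2^4*x3^4*x4^2 - 4*nu*x0*x1^4*x2^5*x3^4*x4 - 2*nu*x0*x1^4*x2^6*x3^4 + 2*nu*x0*x1^5*x2^5*x3^3*x4 + 2*nu*x0*x1^6*x2^5*x3^2*x4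 + nu*x0*x1^6*x2^6*x3^2 - 10*nu*x0*x1^7*x2^6*x3 - 9*nu*x0*x1^8*x2^6 + nu*x0^2*x1^4*x2^4*x3^4*x4 + nu*x0^2*x1^4*x2^5*x3^4 - 2*nu*x0^2*x1^5*x2^4*x3^3*x4 - 2*nu*x0^2*x1^5*x2^5*x3^3 + 2*nu*x0^2*x1^6*x2^4*x3^2*x4 + 4*nu*x0^2*x1^6*x2^5*x3^2 - 2*nu*x0^2*x1^7*x2^5*x3 - 9*nu*x0^2*x1^8*x2^5 + 2*nu*x0^3*x1^7*x2^4*x3 - 3*nu*x0^3*x1^8*x2^4 - 3*nu^2*x1^6*x2^6*x3 - 3*nu^2*x1^7*x2^6 - nu^2*x0*x1^4*x2^4*x3^3*x4 - nu^2*x0*x1^4*x2^5*x3^3 + nu^2*x0*x1^5*x2^4*x3^2*x4 + nu^2*x0*x1^5*x2^5*x3^2 - 2*nu^2*x0*x1^6*x2^5*x3 - 6*nu^2*x0*x1^7*x2^5 + nu^2*x0^2*x1^6*x2^4*x3 - 3*nu^2*x0^2*x1^7*x2^4 - nu^3*x1^6*x2^5 - nu^3*x0*x1^6*x2^4 - 3*c*x1^5*x2^6*x3^2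 - 6*c*x1^6*x2^6*x3 - 3*c*x1^7*x2^6 - c*x0*x1^3*x2^3*x3^4*x4^2 - 3*c*x0*x1^3*x2^4*x3^4*x4 - c*x0*x1^3*x2^5*x3^4 + 2*c*x0*x1^4*x2^4*x3^3*x4 - c*x0*x1^4*x2^5*x3^3 + c*x0*x1^5*x2^4*x3^2*x4 + c*x0*x1^5*x2^5*x3^2 - 7*c*x0*x1^6*x2^5*x3 - 8*c*x0*x1^7*x2^5 + c*x0^2*x1^4*x2^4*x3^3 + c*x0^2*x1^5*x2^3*x3^2*x4 - 7*c*x0^2*x1^7*x2^4 + c*x0^3*x1^6*x2^3*x3 - 2*c*x0^3*x1^7*x2^3 - 6*c*nu*x1^5*x2^5*x3 - 6*c*nu*x1^6*x2^5 - c*nu*x0*x1^3*x2^3*x3^3*x4 - c*nu*x0*x1^3*x2^4*x3^3 + c*nu*x0*x1^4*x2^3*x3^2*x4 - c*nu*x0*x1^5*x2^4*x3 - 10*c*nu*x0*x1^6*x2^4 + c*nu*x0^2*x1^5*x2^3*x3 - 4*c*nu*x0^2*x1^6*x2^3 - 3*c*nu^2*x1^5*x2^4 - 2*c*nu^2*x0*x1^5*x2^3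 - 3*c^2*x1^4*x2^4*x3 - 3*c^2*x1^5*x2^4 - c^2*x0*x1^3*x2^3*x3^2 + c^2*x0*x1^4*x2^3*x3 - 4*c^2*x0*x1^5*x2^3 - c^2*x0^2*x1^5*x2^2 - 3*c^2*nu*x1^4*x2^3 - c^2*nu*x0*x1^4*x2^2 - c^3*x1^3*x2^2 - a*x1^3*x2^4*x3^4*x4 - a*x1^3*x2^5*x3^4 - 2*a*x1^4*x2^4*x3^3*x4 - 3*a*x1^4*x2^6*x3^2 - a*x1^5*x2^4*x3^2*x4 + a*x1^5*x2^5*x3^2 - 6*a*x1^5*x2^6*x3 - 2*a*x1^6*x2^5*x3 - 3*a*x1^6*x2^6 - 2*a*x1^7*x2^5 - a*x0*x1^2*x2^3*x3^4*x4^2 - 3*a*x0*x1^2*x2^4*x3^4*x4 - a*x0*x1^2*x2^5*x3^4 - a*x0*x1^3*x2^2*x3^4*x4^2 - 3*a*x0*x1^3*x2^3*x3^4*x4 + 2*a*x0*x1^3*x2^4*x3^3*x4 - a*x0*x1^3*x2^4*x3^4 + a*x0*x1^4*x2^3*x3^3*x4 + a*x0*x1^4*x2^4*x3^2*x4 - a*x0*x1^4*x2^4*x3^3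 + 4*a*x0*x1^5*x2^4*x3^2 - 8*a*x0*x1^5*x2^5*x3 - 2*a*x0*x1^6*x2^4*x3 - 7*a*x0*x1^6*x2^5 - 6*a*x0*x1^7*x2^4 - a*x0^2*x1^4*x2^2*x3^3*x4 + a*x0^2*x1^4*x2^3*x3^2*x4 - a*x0^2*x1^4*x2^3*x3^3 + 3*a*x0^2*x1^4*x2^4*x3^2 + a*x0^2*x1^5*x2^2*x3^2*x4 + 3*a*x0^2*x1^5*x2^3*x3^2 - 2*a*x0^2*x1^5*x2^4*x3 + 2*a*x0^2*x1^6*x2^3*x3 - 5*a*x0^2*x1^6*x2^4 - 6*a*x0^2*x1^7*x2^3 + 2*a*x0^3*x1^6*x2^2*x3 - a*x0^3*x1^6*x2^3 - 2*a*x0^3*x1^7*x2^2 - a*nu*x1^3*x2^3*x3^3*x4 - a*nu*x1^3*x2^4*x3^3 - a*nu*x1^4*x2^3*x3^2*x4 + 2*a*nu*x1^4*x2^4*x3^2 - 6*a*nu*x1^4*x2^5*x3 - a*nu*x1^5*x2^4*x3 - 6*a*nu*x1^5*x2^5 - 4*a*nu*x1^6*x2^4 - a*nu*x0*x1^2*x2^3*x3^3*x4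 - a*nu*x0*x1^2*x2^4*x3^3 - 2*a*nu*x0*x1^3*x2^2*x3^3*x4 + a*nu*x0*x1^3*x2^3*x3^2*x4 - 2*a*nu*x0*x1^3*x2^3*x3^3 + a*nu*x0*x1^3*x2^4*x3^2 + a*nu*x0*x1^4*x2^2*x3^2*x4 + 3*a*nu*x0*x1^4*x2^3*x3^2 - 3*a*nu*x0*x1^4*x2^4*x3 + 2*a*nu*x0*x1^5*x2^3*x3 - 9*a*nu*x0*x1^5*x2^4 - 8*a*nu*x0*x1^6*x2^3 + a*nu*x0^2*x1^4*x2^3*x3 + 3*a*nu*x0^2*x1^5*x2^2*x3 - 3*a*nu*x0^2*x1^5*x2^3 - 4*a*nu*x0^2*x1^6*x2^2 + a*nu^2*x1^4*x2^3*x3 - 3*a*nu^2*x1^4*x2^4 - 2*a*nu^2*x1^5*x2^3 + a*nu^2*x0*x1^4*x2^2*x3 - 2*a*nu^2*x0*x1^4*x2^3 - 2*a*nu^2*x0*x1^5*x2^2 - a*c*x1^2*x2^2*x3^3*x4 - a*c*x1^2*x2^3*x3^3 - a*c*x1^3*x2^2*x3^2*x4 + 2*a*c*x1^3*x2^3*x3^2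 - 6*a*c*x1^3*x2^4*x3 - a*c*x1^4*x2^3*x3 - 6*a*c*x1^4*x2^4 - 4*a*c*x1^5*x2^3 - a*c*x0*x1^2*x2^3*x3^2 - a*c*x0*x1^3*x2^2*x3^2 + 4*a*c*x0*x1^4*x2^2*x3 - 7*a*c*x0*x1^4*x2^3 - 6*a*c*x0*x1^5*x2^2 + a*c*x0^2*x1^4*x2*x3 - a*c*x0^2*x1^4*x2^2 - 2*a*c*x0^2*x1^5*x2 + 2*a*c*nu*x1^3*x2^2*x3 - 6*a*c*nu*x1^3*x2^3 - 4*a*c*nu*x1^4*x2^2 + a*c*nu*x0*x1^3*x2*x3 - 2*a*c*nu*x0*x1^3*x2^2 - 2*a*c*nu*x0*x1^4*x2 + a*c^2*x1^2*x2*x3 - 3*a*c^2*x1^2*x2^2 - 2*a*c^2*x1^3*x2 - a^2*x1*x2^2*x3^3*x4 - a^2*x1*x2^3*x3^3 - a^2*x1^2*x2^2*x3^2*x4 + 2*a^2*x1^2*x2^3*x3^2 - 3*a^2*x1^2*x2^4*x3 - a^2*x1^3*x2*x3^2*x4 - a^2*x1^3*x2^3*x3 - 3*a^2*x1^3*x2^4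 + a^2*x1^4*x2^2*x3 - 4*a^2*x1^4*x2^3 - a^2*x1^5*x2^2 + a^2*x0*x1^2*x2*x3^2*x4 + a^2*x0*x1^2*x2^2*x3^2 - a^2*x0*x1^2*x2^3*x3 + a^2*x0*x1^3*x2^2*x3 - 3*a^2*x0*x1^3*x2^3 + 2*a^2*x0*x1^4*x2*x3 - 5*a^2*x0*x1^4*x2^2 - 2*a^2*x0*x1^5*x2 + a^2*x0^2*x1^4*x3 - a^2*x0^2*x1^4*x2 - a^2*x0^2*x1^5 + 2*a^2*nu*x1^2*x2^2*x3 - 3*a^2*nu*x1^2*x2^3 + a^2*nu*x1^3*x2*x3 - 4*a^2*nu*x1^3*x2^2 - a^2*nu*x1^4*x2 + a^2*nu*x0*x1^2*x2*x3 - a^2*nu*x0*x1^2*x2^2 + a^2*nu*x0*x1^3*x3 - 2*a^2*nu*x0*x1^3*x2 - a^2*nu*x0*x1^4 + 2*a^2*c*x1*x2*x3 - 3*a^2*c*x1*x2^2 + a^2*c*x1^2*x3 - 4*a^2*c*x1^2*x2 - a^2*c*x1^3 + a^3*x2*x3 - a^3*x2^2 + a^3*x1*x3 - 2*a^3*x1*x2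 - a^3*x1^2) * hE0
    + (- x0*x1^4*x2^6*x3^3*x4^2*x5 - x0*x1^4*x2^6*x3^4*x4^2 + 2*x0*x1^4*x2^7*x3^4*x4 + x0*x1^4*x2^8*x3^4 - x0*x1^5*x2^6*x3^2*x4^2*x5 - x0*x1^5*x2^6*x3^3*x4^2 + 2*x0*x1^5*x2^7*x3^3*x4 + 2*x0*x1^5*x2^8*x3^3 + x0*x1^6*x2^8*x3^2 + x0^2*x1^4*x2^5*x3^3*x4^2*x5 + x0^2*x1^4*x2^5*x3^4*x4^2 - 2*x0^2*x1^4*x2^6*x3^4*x4 - x0^2*x1^4*x2^7*x3^4 - x0^2*x1^5*x2^5*x3^2*x4^2*x5 - x0^2*x1^5*x2^5*x3^3*x4^2 + 2*x0^2*x1^5*x2^6*x3^3*x4 + x0^2*x1^6*x2^7*x3^2 - nu*x0*x1^4*x2^5*x3^2*x4^2*x5 - nu*x0*x1^4*x2^5*x3^3*x4^2 + 2*nu*x0*x1^4*x2^6*x3^3*x4 + 2*nu*x0*x1^4*x2^7*x3^3 + 2*nu*x0*x1^5*x2^7*x3^2 - nu*x0^2*x1^4*x2^6*x3^3 + nu*x0^2*x1^5*x2^6*x3^2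 + nu^2*x0*x1^4*x2^6*x3^2 - c*x0*x1^3*x2^4*x3^2*x4^2*x5 - c*x0*x1^3*x2^4*x3^3*x4^2 + 2*c*x0*x1^3*x2^5*x3^3*x4 + c*x0*x1^3*x2^6*x3^3 + 2*c*x0*x1^4*x2^6*x3^2 + c*x0*x1^5*x2^6*x3 - c*x0^2*x1^4*x2^5*x3^2 + c*x0^2*x1^5*x2^5*x3 + c*nu*x0*x1^3*x2^5*x3^2 + c*nu*x0*x1^4*x2^5*x3 + c^2*x0*x1^3*x2^4*x3 + a*x1^3*x2^6*x3^3 + 2*a*x1^4*x2^6*x3^2 + a*x1^5*x2^6*x3 - a*x0*x1^2*x2^4*x3^2*x4^2*x5 - a*x0*x1^2*x2^4*x3^3*x4^2 + 2*a*x0*x1^2*x2^5*x3^3*x4 + a*x0*x1^2*x2^6*x3^3 - a*x0*x1^3*x2^3*x3^2*x4^2*x5 - a*x0*x1^3*x2^3*x3^3*x4^2 + 2*a*x0*x1^3*x2^4*x3^3*x4 + a*x0*x1^3*x2^5*x3^3 + a*x0*x1^3*x2^6*x3^2 + 3*a*x0*x1^4*x2^5*x3^2 + a*x0*x1^4*x2^6*x3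 + 2*a*x0*x1^5*x2^5*x3 + a*x0*x1^5*x2^6 - a*x0^2*x1^4*x2^5*x3 + a*x0^2*x1^5*x2^4*x3 + a*x0^2*x1^5*x2^5 + a*nu*x1^3*x2^5*x3^2 + a*nu*x1^4*x2^5*x3 + a*nu*x0*x1^2*x2^5*x3^2 + 2*a*nu*x0*x1^3*x2^4*x3^2 + a*nu*x0*x1^4*x2^4*x3 + a*nu*x0*x1^4*x2^5 + a*c*x1^2*x2^4*x3^2 + a*c*x1^3*x2^4*x3 + a*c*x0*x1^2*x2^4*x3 + 2*a*c*x0*x1^3*x2^3*x3 + a*c*x0*x1^3*x2^4 + a^2*x1*x2^4*x3^2 + a^2*x1^2*x2^4*x3 + a^2*x1^3*x2^3*x3 + a^2*x0*x1^2*x2^4 + a^2*x0*x1^3*x2^2*x3 + a^2*x0*x1^3*x2^3) * hE1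
    + (x0*x1^4*x2^6*x3^5*x4 + x0*x1^5*x2^6*x3^4*x4 - x0^2*x1^4*x2^5*x3^5*x4 + x0^2*x1^5*x2^5*x3^4*x4 + nu*x0*x1^4*x2^5*x3^4*x4 + c*x0*x1^3*x2^4*x3^4*x4 + a*x0*x1^2*x2^4*x3^4*x4 + a*x0*x1^3*x2^3*x3^4*x4) * hE2

theorem stmt11 (a c nu h1 h2 : ℝ) (tau : ℕ → ℝ) (w : ℕ → ℝ)
    (htnz : ∀ n, tau n ≠ 0)
    (hw : ∀ n, w n = tau n * tau (n+2) / (tau (n+1))^2)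
    (hrec : ∀ n, w (n+4) * (w (n+3))^2 * (w (n+2))^2 + (w (n+2))^2 * (w (n+1))^2 * w n + (w (n+2))^3 * (w (n+1) + w (n+3))^2 + nu * (w (n+2))^2 * (w (n+1) + w (n+3)) + c * w (n+2) + a = 0)
    (hH1 : ∀ n, H1v a c nu (w n) (w (n+1)) (w (n+2)) (w (n+3)) = h1)
    (hH2 : ∀ n, H2v a c nu (w n) (w (n+1)) (w (n+2)) (w (n+3)) = h2) :
    ∀ n, h1 * (tau (n+8) * tau n)
      + (a * h2) * (tau (n+7) * tau (n+1))
      + (a^2 * h2 - h1^3) * (tau (n+6) * tau (n+2))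
      + (a * (h2^2 + nu * h1 * h2 + c * h1^2 + a^2 * h1)) * (tau (n+5) * tau (n+3))
      + (-(h1) * (h2^2 + nu * h1 * h2 + c * h1^2 + a^2 * h1)) * (tau (n+4))^2 = 0 := by
  intro n
  -- nonvanishing of the w's
  have hwnz : ∀ m, w m ≠ 0 := by
    intro m
    rw [hw m]
    exact div_ne_zero (mul_ne_zero (htnz m) (htnz (m+2))) (pow_ne_zero 2 (htnz (m+1)))
  -- multiplicative relations m_j : w (n+j) * tau (n+j+1)^2 = tau (n+j) * tau (n+j+2)
  have m0 : w n * (tau (n+1))^2 = tau n * tau (n+2) := by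
    rw [hw n, div_mul_cancel₀ _ (pow_ne_zero 2 (htnz _))]
  have m1 : w (n+1) * (tau (n+2))^2 = tau (n+1) * tau (n+3) := by
    have h := hw (n+1)
    simp only [show n+1+2 = n+3 from rfl, show n+1+1 = n+2 from rfl] at h
    rw [h, div_mul_cancel₀ _ (pow_ne_zero 2 (htnz _))]
  have m2 : w (n+2) * (tau (n+3))^2 = tau (n+2) * tau (n+4) := by
    have h := hw (n+2)
    simp only [show n+2+2 = n+4 from rfl, show n+2+1 = n+3 from rfl] at h
    rw [h, div_mul_cancel₀ _ (pow_ne_zero 2 (htnz _))]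
  have m3 : w (n+3) * (tau (n+4))^2 = tau (n+3) * tau (n+5) := by
    have h := hw (n+3)
    simp only [show n+3+2 = n+5 from rfl, show n+3+1 = n+4 from rfl] at h
    rw [h, div_mul_cancel₀ _ (pow_ne_zero 2 (htnz _))]
  have m4 : w (n+4) * (tau (n+5))^2 = tau (n+4) * tau (n+6) := by
    have h := hw (n+4)
    simp only [show n+4+2 = n+6 from rfl, show n+4+1 = n+5 from rfl] at h
    rw [h, div_mul_cancel₀ _ (pow_ne_zero 2 (htnz _))]
  have m5 : w (n+5) * (tau (n+6))^2 = tau (n+5) * tau (n+7) := by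
    have h := hw (n+5)
    simp only [show n+5+2 = n+7 from rfl, show n+5+1 = n+6 from rfl] at h
    rw [h, div_mul_cancel₀ _ (pow_ne_zero 2 (htnz _))]
  have m6 : w (n+6) * (tau (n+7))^2 = tau (n+6) * tau (n+8) := by
    have h := hw (n+6)
    simp only [show n+6+2 = n+8 from rfl, show n+6+1 = n+7 from rfl] at h
    rw [h, div_mul_cancel₀ _ (pow_ne_zero 2 (htnz _))]
  -- recurrence instances
  have hE0 := hrec n
  have hE1 := hrec (n+1)
  have hE2 := hrec (n+2)
  simp only [show n+1+4 = n+5 from rfl, show n+1+3 = n+4 from rfl, show n+1+2 = n+3 from rfl,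
    show n+1+1 = n+2 from rfl] at hE1
  simp only [show n+2+4 = n+6 from rfl, show n+2+3 = n+5 from rfl, show n+2+2 = n+4 from rfl,
    show n+2+1 = n+3 from rfl] at hE2
  -- the key polynomial identity in the w's
  have hT := key a c nu h1 h2 (w n) (w (n+1)) (w (n+2)) (w (n+3)) (w (n+4)) (w (n+5)) (w (n+6))
    (by linear_combination hE0) (by linear_combination hE1) (by linear_combination hE2)
    (hH1 n) (hH2 n)
  set u0 := tau n
  set u1 := tau (n+1)
  set u2 := tau (n+2)
  set u3 := tau (n+3)
  set u4 := tau (n+4)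
  set u5 := tau (n+5)
  set u6 := tau (n+6)
  set u7 := tau (n+7)
  set u8 := tau (n+8)
  set x0 := w n
  set x1 := w (n+1)
  set x2 := w (n+2)
  set x3 := w (n+3)
  set x4 := w (n+4)
  set x5 := w (n+5)
  set x6 := w (n+6)
  have hu4 : u4 ≠ 0 := htnz (n+4)
  have hx3 : x3 ≠ 0 := hwnz (n+3)
  have e1 : u5 * u3 = x3 * u4^2 := by linear_combination -m3
  have e2 : u6 * u2 = x2 * x4 * x3^2 * u4^2 := by
    refine mul_right_cancel₀ (pow_ne_zero 2 hu4) ?_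
    linear_combination (-(u2*u4))*m4 + (-(x4*u5^2))*m2 + x4*x2*(u5*u3 + x3*u4^2)*e1
  have e3 : u7 * u1 = x5 * x1 * x2^2 * x4^2 * x3^3 * u4^2 := by
    refine mul_right_cancel₀ (mul_ne_zero hx3 (pow_ne_zero 2 hu4)) ?_
    linear_combination (-(u7*u1))*e1 + (-(u1*u3))*m5 + (-(x5*u6^2))*m1
      + x5*x1*(u6*u2 + x2*x4*x3^2*u4^2)*e2
  have e4 : u8 * u0 = x6 * x0 * x5^2 * x1^2 * x2^3 * x4^3 * x3^4 * u4^2 := by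
    have hx2 : x2 ≠ 0 := hwnz (n+2)
    have hx4 : x4 ≠ 0 := hwnz (n+4)
    refine mul_right_cancel₀
      (mul_ne_zero (mul_ne_zero (mul_ne_zero hx2 hx4) (pow_ne_zero 2 hx3)) (pow_ne_zero 2 hu4)) ?_
    linear_combination (-(u8*u0))*e2 + (-(u0*u2))*m6 + (-(x6*u7^2))*m0
      + x6*x0*(u7*u1 + x5*x1*x2^2*x4^2*x3^3*u4^2)*e3
  linear_combination h1*e4 + (a*h2)*e3 + (a^2*h2 - h1^3)*e2
    + (a*(h2^2 + nu*h1*h2 + c*h1^2 + a^2*h1))*e1 + u4^2*hT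
end

section
/- The polynomial H1(w0,w1,w2,w3) = (w1^2*w2^2 − δ^2*(w1^2+w2^2))*(w3*w2 + w0*w1 + w1*w2 − w3*w0 + ν̄) + δ^4*(w3*w2 + w0*w1 − w0*w3) + c̄*w2*w1 + ā*(w2+w1) is invariant under the map (P.vi): H1(w1,w2,w3,w4) = H1(w0,w1,w2,w3) whenever w4*(w3^2−δ^2)*(w2^2−δ^2) + w0*(w1^2−δ^2)*(w2^2−δ^2) + w2*((w2^2−δ^2)*(w3+w1)^2 + c̄ − δ^4) + ν̄*(w2^2−δ^2)*(w3+w1) + ā = 0. -/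
noncomputable def H1vi (a c nu d w0 w1 w2 w3 : ℝ) : ℝ :=
  (w1^2*w2^2 - d^2*(w1^2+w2^2))*(w3*w2 + w0*w1 + w1*w2 - w3*w0 + nu) + d^4*(w3*w2 + w0*w1 - w0*w3) + c*w2*w1 + a*(w2+w1)

theorem stmt12 (a c nu d w0 w1 w2 w3 w4 : ℝ)
    (h2 : w2^2 - d^2 ≠ 0) (h3 : w3^2 - d^2 ≠ 0)
    (hrel : w4*(w3^2 - d^2)*(w2^2 - d^2) + w0*(w1^2 - d^2)*(w2^2 - d^2) + w2*((w2^2 - d^2)*(w3+w1)^2 + c - d^4) + nu*(w2^2 - d^2)*(w3+w1) + a = 0) :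
    H1vi a c nu d w1 w2 w3 w4 = H1vi a c nu d w0 w1 w2 w3 := by
  unfold H1vi
  linear_combination (w3 - w1) * hrel
end

section
/- Miura map from (P.vi) to (P.iv): Let (w_n) satisfy the (P.vi) recurrence with parameters ā, c̄, ν̄, δ and with w_n^2 ≠ δ^2 for all n, and let h̄1 be the value of the (P.vi) invariant H1 along the orbit. Then, for either choice of sign, ŵ_n := (w_{n+1} ∓ δ)*(w_n ± δ) satisfies the (P.iv) recurrence with parameters ν = ν̄ + 6δ^2, b = c̄ + 4ν̄δ^2 + 7δ^4, a = h̄1 + c̄δ^2 + ν̄δ^4 − δ^6. -/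
set_option maxHeartbeats 1000000

lemma auxP (a c nu d h1 u0 u1 u2 u3 u4 u5 : ℝ)
    (h2 : u2^2 ≠ d^2) (h3 : u3^2 ≠ d^2) (h4 : u4^2 ≠ d^2)
    (hr0 : u4 * (u3^2 - d^2) * (u2^2 - d^2) + u0 * (u1^2 - d^2) * (u2^2 - d^2) + u2 * ((u2^2 - d^2) * (u3 + u1)^2 + c - d^4) + nu * (u2^2 - d^2) * (u3 + u1) + a = 0)
    (hr1 : u5 * (u4^2 - d^2) * (u3^2 - d^2) + u1 * (u2^2 - d^2) * (u3^2 - d^2) + u3 * ((u3^2 - d^2) * (u4 + u2)^2 + c - d^4) + nu * (u3^2 - d^2) * (u4 + u2) + a = 0)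
    (hH : H1vi a c nu d u1 u2 u3 u4 = h1) :
    (1*h1 + 1*u5*d^5 + (-1)*u4*d^3*nu + (-1)*u4*d^5 + (-1)*u4^2*u5*d^3 + 1*u3*d*c + 1*u3*d^3*nu + (-1)*u3*d^5 + (-1)*u3*u4^2*d^3 + (-1)*u3^2*u5*d^3 + 1*u3^2*u4*d*nu + 1*u3^2*u4*d^3 + 1*u3^2*u4^2*u5*d + 1*u3^3*u4^2*d + (-1)*u2*d*c + (-1)*u2*d^3*nu + 1*u2*d^5 + 1*u2*u5*d^4 + (-1)*u2*u4*d^2*nu + (-1)*u2*u4^2*u5*d^2 + 1*u2*u3*c + (-2)*u2*u3*d^4 + (-2)*u2*u3*u4*d^3 + (-1)*u2*u3*u4^2*d^2 + 1*u2*u3^2*d*nu + 1*u2*u3^2*d^3 + (-1)*u2*u3^2*u5*d^2 + 1*u2*u3^2*u4*nu + 1*u2*u3^2*u4^2*u5 + 2*u2*u3^3*u4*d + 1*u2*u3^3*u4^2 + 1*u2^2*u4*d^3 + (-1)*u2^2*u3*d*nu + (-1)*u2^2*u3*d^3 + (-2)*u2^2*u3*u4*d^2 + 1*u2^2*u3^2*nu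 + (-1)*u2^2*u3^2*u4*d + 1*u2^2*u3^3*d + 2*u2^2*u3^3*u4 + (-1)*u2^3*u3^2*d + 1*u2^3*u3^3 + 1*u1*d^3*nu + 1*u1*d^5 + 1*u1*u4*d^4 + (-1)*u1*u3*d^2*nu + (-1)*u1*u3^2*d^3 + (-1)*u1*u3^2*u4*d^2 + 2*u1*u2*u3*d^3 + (-2)*u1*u2*u3^2*d^2 + (-1)*u1*u2^2*d*nu + (-1)*u1*u2^2*d^3 + (-1)*u1*u2^2*u4*d^2 + 1*u1*u2^2*u3*nu + 1*u1*u2^2*u3^2*d + 1*u1*u2^2*u3^2*u4 + (-2)*u1*u2^3*u3*d + 2*u1*u2^3*u3^2 + 1*u1^2*u2*d^3 + (-1)*u1^2*u2*u3*d^2 + (-1)*u1^2*u2^3*d + 1*u1^2*u2^3*u3 + (-1)*u0*d^5 + 1*u0*u3*d^4 + 1*u0*u2^2*d^3 + (-1)*u0*u2^2*u3*d^2 + 1*u0*u1^2*d^3 + (-1)*u0*u1^2*u3*d^2 + (-1)*u0*u1^2*u2^2*d + 1*u0*u1^2*u2^2*u3) = 0 := by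
  have hD : (((u3^2-d^2)*(u2^2-d^2))^2*((u4^2-d^2)*(u3^2-d^2))) ≠ 0 := by
    intro h
    rcases mul_eq_zero.mp h with h | h
    · rcases pow_eq_zero_iff (by norm_num) |>.mp h with h'
      rcases mul_eq_zero.mp h' with h'' | h'' <;> [exact h3 (by linarith [sub_eq_zero.mp h'']); exact h2 (by linarith [sub_eq_zero.mp h''])]
    · rcases mul_eq_zero.mp h with h'' | h'' <;> [exact h4 (by linarith [sub_eq_zero.mp h'']); exact h3 (by linarith [sub_eq_zero.mp h''])]
  have key : (((u3^2-d^2)*(u2^2-d^2))^2*((u4^2-d^2)*(u3^2-d^2))) * ((1*h1 + 1*u5*d^5 + (-1)*u4*d^3*nu + (-1)*u4*d^5 + (-1)*u4^2*u5*d^3 + 1*u3*d*c + 1*u3*d^3*nu + (-1)*u3*d^5 + (-1)*u3*u4^2*d^3 + (-1)*u3^2*u5*d^3 + 1*u3^2*u4*d*nu + 1*u3^2*u4*d^3 + 1*u3^2*u4^2*u5*d + 1*u3^3*u4^2*d + (-1)*u2*d*c + (-1)*u2*d^3*nu + 1*u2*d^5 + 1*u2*u5*d^4 + (-1)*u2*u4*d^2*nu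 + (-1)*u2*u4^2*u5*d^2 + 1*u2*u3*c + (-2)*u2*u3*d^4 + (-2)*u2*u3*u4*d^3 + (-1)*u2*u3*u4^2*d^2 + 1*u2*u3^2*d*nu + 1*u2*u3^2*d^3 + (-1)*u2*u3^2*u5*d^2 + 1*u2*u3^2*u4*nu + 1*u2*u3^2*u4^2*u5 + 2*u2*u3^3*u4*d + 1*u2*u3^3*u4^2 + 1*u2^2*u4*d^3 + (-1)*u2^2*u3*d*nu + (-1)*u2^2*u3*d^3 + (-2)*u2^2*u3*u4*d^2 + 1*u2^2*u3^2*nu + (-1)*u2^2*u3^2*u4*d + 1*u2^2*u3^3*d + 2*u2^2*u3^3*u4 + (-1)*u2^3*u3^2*d + 1*u2^3*u3^3 + 1*u1*d^3*nu + 1*u1*d^5 + 1*u1*u4*d^4 + (-1)*u1*u3*d^2*nu + (-1)*u1*u3^2*d^3 + (-1)*u1*u3^2*u4*d^2 + 2*u1*u2*u3*d^3 + (-2)*u1*u2*u3^2*d^2 + (-1)*u1*u2^2*d*nu + (-1)*u1*u2^2*d^3 + (-1)*u1*u2^2*u4*d^2 + 1*u1*u2^2*u3*nu + 1*u1*u2^2*u3^2*d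 + 1*u1*u2^2*u3^2*u4 + (-2)*u1*u2^3*u3*d + 2*u1*u2^3*u3^2 + 1*u1^2*u2*d^3 + (-1)*u1^2*u2*u3*d^2 + (-1)*u1^2*u2^3*d + 1*u1^2*u2^3*u3 + (-1)*u0*d^5 + 1*u0*u3*d^4 + 1*u0*u2^2*d^3 + (-1)*u0*u2^2*u3*d^2 + 1*u0*u1^2*d^3 + (-1)*u0*u1^2*u3*d^2 + (-1)*u0*u1^2*u2^2*d + 1*u0*u1^2*u2^2*u3)) = 0 := by
    simp only [H1vi] at hH
    linear_combination ((-1)*d^13 + 1*u4^2*d^11 + 1*u3*d^12 + (-1)*u3*u4^2*d^10 + 3*u3^2*d^11 + (-3)*u3^2*u4^2*d^9 + (-3)*u3^3*d^10 + 3*u3^3*u4^2*d^8 + (-3)*u3^4*d^9 + 3*u3^4*u4^2*d^7 + 3*u3^5*d^8 + (-3)*u3^5*u4^2*d^6 + 1*u3^6*d^7 + (-1)*u3^6*u4^2*d^5 + (-1)*u3^7*d^6 + 1*u3^7*u4^2*d^4 + 2*u2^2*d^11 + (-2)*u2^2*u4^2*d^9 + (-2)*u2^2*u3*d^10 + 2*u2^2*u3*u4^2*d^8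 + (-6)*u2^2*u3^2*d^9 + 6*u2^2*u3^2*u4^2*d^7 + 6*u2^2*u3^3*d^8 + (-6)*u2^2*u3^3*u4^2*d^6 + 6*u2^2*u3^4*d^7 + (-6)*u2^2*u3^4*u4^2*d^5 + (-6)*u2^2*u3^5*d^6 + 6*u2^2*u3^5*u4^2*d^4 + (-2)*u2^2*u3^6*d^5 + 2*u2^2*u3^6*u4^2*d^3 + 2*u2^2*u3^7*d^4 + (-2)*u2^2*u3^7*u4^2*d^2 + (-1)*u2^4*d^9 + 1*u2^4*u4^2*d^7 + 1*u2^4*u3*d^8 + (-1)*u2^4*u3*u4^2*d^6 + 3*u2^4*u3^2*d^7 + (-3)*u2^4*u3^2*u4^2*d^5 + (-3)*u2^4*u3^3*d^6 + 3*u2^4*u3^3*u4^2*d^4 + (-3)*u2^4*u3^4*d^5 + 3*u2^4*u3^4*u4^2*d^3 + 3*u2^4*u3^5*d^4 + (-3)*u2^4*u3^5*u4^2*d^2 + 1*u2^4*u3^6*d^3 + (-1)*u2^4*u3^6*u4^2*d + (-1)*u2^4*u3^7*d^2 + 1*u2^4*u3^7*u4^2) * hr0 + (1*d^13 + (-1)*u4^2*d^11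 + (-3)*u3^2*d^11 + 3*u3^2*u4^2*d^9 + 3*u3^4*d^9 + (-3)*u3^4*u4^2*d^7 + (-1)*u3^6*d^7 + 1*u3^6*u4^2*d^5 + 1*u2*d^12 + (-1)*u2*u4^2*d^10 + (-3)*u2*u3^2*d^10 + 3*u2*u3^2*u4^2*d^8 + 3*u2*u3^4*d^8 + (-3)*u2*u3^4*u4^2*d^6 + (-1)*u2*u3^6*d^6 + 1*u2*u3^6*u4^2*d^4 + (-2)*u2^2*d^11 + 2*u2^2*u4^2*d^9 + 6*u2^2*u3^2*d^9 + (-6)*u2^2*u3^2*u4^2*d^7 + (-6)*u2^2*u3^4*d^7 + 6*u2^2*u3^4*u4^2*d^5 + 2*u2^2*u3^6*d^5 + (-2)*u2^2*u3^6*u4^2*d^3 + (-2)*u2^3*d^10 + 2*u2^3*u4^2*d^8 + 6*u2^3*u3^2*d^8 + (-6)*u2^3*u3^2*u4^2*d^6 + (-6)*u2^3*u3^4*d^6 + 6*u2^3*u3^4*u4^2*d^4 + 2*u2^3*u3^6*d^4 + (-2)*u2^3*u3^6*u4^2*d^2 + 1*u2^4*d^9 + (-1)*u2^4*u4^2*d^7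 + (-3)*u2^4*u3^2*d^7 + 3*u2^4*u3^2*u4^2*d^5 + 3*u2^4*u3^4*d^5 + (-3)*u2^4*u3^4*u4^2*d^3 + (-1)*u2^4*u3^6*d^3 + 1*u2^4*u3^6*u4^2*d + 1*u2^5*d^8 + (-1)*u2^5*u4^2*d^6 + (-3)*u2^5*u3^2*d^6 + 3*u2^5*u3^2*u4^2*d^4 + 3*u2^5*u3^4*d^4 + (-3)*u2^5*u3^4*u4^2*d^2 + (-1)*u2^5*u3^6*d^2 + 1*u2^5*u3^6*u4^2) * hr1 + ((-1)*d^12 + 1*u4^2*d^10 + 3*u3^2*d^10 + (-3)*u3^2*u4^2*d^8 + (-3)*u3^4*d^8 + 3*u3^4*u4^2*d^6 + 1*u3^6*d^6 + (-1)*u3^6*u4^2*d^4 + 2*u2^2*d^10 + (-2)*u2^2*u4^2*d^8 + (-6)*u2^2*u3^2*d^8 + 6*u2^2*u3^2*u4^2*d^6 + 6*u2^2*u3^4*d^6 + (-6)*u2^2*u3^4*u4^2*d^4 + (-2)*u2^2*u3^6*d^4 + 2*u2^2*u3^6*u4^2*d^2 + (-1)*u2^4*d^8 + 1*u2^4*u4^2*d^6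 + 3*u2^4*u3^2*d^6 + (-3)*u2^4*u3^2*u4^2*d^4 + (-3)*u2^4*u3^4*d^4 + 3*u2^4*u3^4*u4^2*d^2 + 1*u2^4*u3^6*d^2 + (-1)*u2^4*u3^6*u4^2) * hH
  exact (mul_eq_zero.mp key).resolve_left hD

lemma auxM (a c nu d h1 u0 u1 u2 u3 u4 u5 : ℝ)
    (h2 : u2^2 ≠ d^2) (h3 : u3^2 ≠ d^2) (h4 : u4^2 ≠ d^2)
    (hr0 : u4 * (u3^2 - d^2) * (u2^2 - d^2) + u0 * (u1^2 - d^2) * (u2^2 - d^2) + u2 * ((u2^2 - d^2) * (u3 + u1)^2 + c - d^4) + nu * (u2^2 - d^2) * (u3 + u1) + a = 0)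
    (hr1 : u5 * (u4^2 - d^2) * (u3^2 - d^2) + u1 * (u2^2 - d^2) * (u3^2 - d^2) + u3 * ((u3^2 - d^2) * (u4 + u2)^2 + c - d^4) + nu * (u3^2 - d^2) * (u4 + u2) + a = 0)
    (hH : H1vi a c nu d u1 u2 u3 u4 = h1) :
    (1*h1 + (-1)*u5*d^5 + 1*u4*d^3*nu + 1*u4*d^5 + 1*u4^2*u5*d^3 + (-1)*u3*d*c + (-1)*u3*d^3*nu + 1*u3*d^5 + 1*u3*u4^2*d^3 + 1*u3^2*u5*d^3 + (-1)*u3^2*u4*d*nu + (-1)*u3^2*u4*d^3 + (-1)*u3^2*u4^2*u5*d + (-1)*u3^3*u4^2*d + 1*u2*d*c + 1*u2*d^3*nu + (-1)*u2*d^5 + 1*u2*u5*d^4 + (-1)*u2*u4*d^2*nu + (-1)*u2*u4^2*u5*d^2 + 1*u2*u3*c + (-2)*u2*u3*d^4 + 2*u2*u3*u4*d^3 + (-1)*u2*u3*u4^2*d^2 + (-1)*u2*u3^2*d*nu + (-1)*u2*u3^2*d^3 + (-1)*u2*u3^2*u5*d^2 + 1*u2*u3^2*u4*nu + 1*u2*u3^2*u4^2*u5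 + (-2)*u2*u3^3*u4*d + 1*u2*u3^3*u4^2 + (-1)*u2^2*u4*d^3 + 1*u2^2*u3*d*nu + 1*u2^2*u3*d^3 + (-2)*u2^2*u3*u4*d^2 + 1*u2^2*u3^2*nu + 1*u2^2*u3^2*u4*d + (-1)*u2^2*u3^3*d + 2*u2^2*u3^3*u4 + 1*u2^3*u3^2*d + 1*u2^3*u3^3 + (-1)*u1*d^3*nu + (-1)*u1*d^5 + 1*u1*u4*d^4 + (-1)*u1*u3*d^2*nu + 1*u1*u3^2*d^3 + (-1)*u1*u3^2*u4*d^2 + (-2)*u1*u2*u3*d^3 + (-2)*u1*u2*u3^2*d^2 + 1*u1*u2^2*d*nu + 1*u1*u2^2*d^3 + (-1)*u1*u2^2*u4*d^2 + 1*u1*u2^2*u3*nu + (-1)*u1*u2^2*u3^2*d + 1*u1*u2^2*u3^2*u4 + 2*u1*u2^3*u3*d + 2*u1*u2^3*u3^2 + (-1)*u1^2*u2*d^3 + (-1)*u1^2*u2*u3*d^2 + 1*u1^2*u2^3*d + 1*u1^2*u2^3*u3 + 1*u0*d^5 + 1*u0*u3*d^4 + (-1)*u0*u2^2*d^3 + (-1)*u0*u2^2*u3*d^2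 + (-1)*u0*u1^2*d^3 + (-1)*u0*u1^2*u3*d^2 + 1*u0*u1^2*u2^2*d + 1*u0*u1^2*u2^2*u3) = 0 := by
  have hD : (((u3^2-d^2)*(u2^2-d^2))^2*((u4^2-d^2)*(u3^2-d^2))) ≠ 0 := by
    intro h
    rcases mul_eq_zero.mp h with h | h
    · rcases pow_eq_zero_iff (by norm_num) |>.mp h with h'
      rcases mul_eq_zero.mp h' with h'' | h'' <;> [exact h3 (by linarith [sub_eq_zero.mp h'']); exact h2 (by linarith [sub_eq_zero.mp h''])]
    · rcases mul_eq_zero.mp h with h'' | h'' <;> [exact h4 (by linarith [sub_eq_zero.mp h'']); exact h3 (by linarith [sub_eq_zero.mp h''])]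
  have key : (((u3^2-d^2)*(u2^2-d^2))^2*((u4^2-d^2)*(u3^2-d^2))) * ((1*h1 + (-1)*u5*d^5 + 1*u4*d^3*nu + 1*u4*d^5 + 1*u4^2*u5*d^3 + (-1)*u3*d*c + (-1)*u3*d^3*nu + 1*u3*d^5 + 1*u3*u4^2*d^3 + 1*u3^2*u5*d^3 + (-1)*u3^2*u4*d*nu + (-1)*u3^2*u4*d^3 + (-1)*u3^2*u4^2*u5*d + (-1)*u3^3*u4^2*d + 1*u2*d*c + 1*u2*d^3*nu + (-1)*u2*d^5 + 1*u2*u5*d^4 + (-1)*u2*u4*d^2*nu + (-1)*u2*u4^2*u5*d^2 + 1*u2*u3*c + (-2)*u2*u3*d^4 + 2*u2*u3*u4*d^3 + (-1)*u2*u3*u4^2*d^2 + (-1)*u2*u3^2*d*nu + (-1)*u2*u3^2*d^3 + (-1)*u2*u3^2*u5*d^2 + 1*u2*u3^2*u4*nu + 1*u2*u3^2*u4^2*u5 + (-2)*u2*u3^3*u4*d + 1*u2*u3^3*u4^2 + (-1)*u2^2*u4*d^3 + 1*u2^2*u3*d*nu + 1*u2^2*u3*d^3 + (-2)*u2^2*u3*u4*d^2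 + 1*u2^2*u3^2*nu + 1*u2^2*u3^2*u4*d + (-1)*u2^2*u3^3*d + 2*u2^2*u3^3*u4 + 1*u2^3*u3^2*d + 1*u2^3*u3^3 + (-1)*u1*d^3*nu + (-1)*u1*d^5 + 1*u1*u4*d^4 + (-1)*u1*u3*d^2*nu + 1*u1*u3^2*d^3 + (-1)*u1*u3^2*u4*d^2 + (-2)*u1*u2*u3*d^3 + (-2)*u1*u2*u3^2*d^2 + 1*u1*u2^2*d*nu + 1*u1*u2^2*d^3 + (-1)*u1*u2^2*u4*d^2 + 1*u1*u2^2*u3*nu + (-1)*u1*u2^2*u3^2*d + 1*u1*u2^2*u3^2*u4 + 2*u1*u2^3*u3*d + 2*u1*u2^3*u3^2 + (-1)*u1^2*u2*d^3 + (-1)*u1^2*u2*u3*d^2 + 1*u1^2*u2^3*d + 1*u1^2*u2^3*u3 + 1*u0*d^5 + 1*u0*u3*d^4 + (-1)*u0*u2^2*d^3 + (-1)*u0*u2^2*u3*d^2 + (-1)*u0*u1^2*d^3 + (-1)*u0*u1^2*u3*d^2 + 1*u0*u1^2*u2^2*d + 1*u0*u1^2*u2^2*u3)) = 0 := by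
    simp only [H1vi] at hH
    linear_combination (1*d^13 + (-1)*u4^2*d^11 + 1*u3*d^12 + (-1)*u3*u4^2*d^10 + (-3)*u3^2*d^11 + 3*u3^2*u4^2*d^9 + (-3)*u3^3*d^10 + 3*u3^3*u4^2*d^8 + 3*u3^4*d^9 + (-3)*u3^4*u4^2*d^7 + 3*u3^5*d^8 + (-3)*u3^5*u4^2*d^6 + (-1)*u3^6*d^7 + 1*u3^6*u4^2*d^5 + (-1)*u3^7*d^6 + 1*u3^7*u4^2*d^4 + (-2)*u2^2*d^11 + 2*u2^2*u4^2*d^9 + (-2)*u2^2*u3*d^10 + 2*u2^2*u3*u4^2*d^8 + 6*u2^2*u3^2*d^9 + (-6)*u2^2*u3^2*u4^2*d^7 + 6*u2^2*u3^3*d^8 + (-6)*u2^2*u3^3*u4^2*d^6 + (-6)*u2^2*u3^4*d^7 + 6*u2^2*u3^4*u4^2*d^5 + (-6)*u2^2*u3^5*d^6 + 6*u2^2*u3^5*u4^2*d^4 + 2*u2^2*u3^6*d^5 + (-2)*u2^2*u3^6*u4^2*d^3 + 2*u2^2*u3^7*d^4 + (-2)*u2^2*u3^7*u4^2*d^2 +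 1*u2^4*d^9 + (-1)*u2^4*u4^2*d^7 + 1*u2^4*u3*d^8 + (-1)*u2^4*u3*u4^2*d^6 + (-3)*u2^4*u3^2*d^7 + 3*u2^4*u3^2*u4^2*d^5 + (-3)*u2^4*u3^3*d^6 + 3*u2^4*u3^3*u4^2*d^4 + 3*u2^4*u3^4*d^5 + (-3)*u2^4*u3^4*u4^2*d^3 + 3*u2^4*u3^5*d^4 + (-3)*u2^4*u3^5*u4^2*d^2 + (-1)*u2^4*u3^6*d^3 + 1*u2^4*u3^6*u4^2*d + (-1)*u2^4*u3^7*d^2 + 1*u2^4*u3^7*u4^2) * hr0 + ((-1)*d^13 + 1*u4^2*d^11 + 3*u3^2*d^11 + (-3)*u3^2*u4^2*d^9 + (-3)*u3^4*d^9 + 3*u3^4*u4^2*d^7 + 1*u3^6*d^7 + (-1)*u3^6*u4^2*d^5 + 1*u2*d^12 + (-1)*u2*u4^2*d^10 + (-3)*u2*u3^2*d^10 + 3*u2*u3^2*u4^2*d^8 + 3*u2*u3^4*d^8 + (-3)*u2*u3^4*u4^2*d^6 + (-1)*u2*u3^6*d^6 + 1*u2*u3^6*u4^2*d^4 + 2*u2^2*d^11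 + (-2)*u2^2*u4^2*d^9 + (-6)*u2^2*u3^2*d^9 + 6*u2^2*u3^2*u4^2*d^7 + 6*u2^2*u3^4*d^7 + (-6)*u2^2*u3^4*u4^2*d^5 + (-2)*u2^2*u3^6*d^5 + 2*u2^2*u3^6*u4^2*d^3 + (-2)*u2^3*d^10 + 2*u2^3*u4^2*d^8 + 6*u2^3*u3^2*d^8 + (-6)*u2^3*u3^2*u4^2*d^6 + (-6)*u2^3*u3^4*d^6 + 6*u2^3*u3^4*u4^2*d^4 + 2*u2^3*u3^6*d^4 + (-2)*u2^3*u3^6*u4^2*d^2 + (-1)*u2^4*d^9 + 1*u2^4*u4^2*d^7 + 3*u2^4*u3^2*d^7 + (-3)*u2^4*u3^2*u4^2*d^5 + (-3)*u2^4*u3^4*d^5 + 3*u2^4*u3^4*u4^2*d^3 + 1*u2^4*u3^6*d^3 + (-1)*u2^4*u3^6*u4^2*d + 1*u2^5*d^8 + (-1)*u2^5*u4^2*d^6 + (-3)*u2^5*u3^2*d^6 + 3*u2^5*u3^2*u4^2*d^4 + 3*u2^5*u3^4*d^4 + (-3)*u2^5*u3^4*u4^2*d^2 + (-1)*u2^5*u3^6*d^2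 + 1*u2^5*u3^6*u4^2) * hr1 + ((-1)*d^12 + 1*u4^2*d^10 + 3*u3^2*d^10 + (-3)*u3^2*u4^2*d^8 + (-3)*u3^4*d^8 + 3*u3^4*u4^2*d^6 + 1*u3^6*d^6 + (-1)*u3^6*u4^2*d^4 + 2*u2^2*d^10 + (-2)*u2^2*u4^2*d^8 + (-6)*u2^2*u3^2*d^8 + 6*u2^2*u3^2*u4^2*d^6 + 6*u2^2*u3^4*d^6 + (-6)*u2^2*u3^4*u4^2*d^4 + (-2)*u2^2*u3^6*d^4 + 2*u2^2*u3^6*u4^2*d^2 + (-1)*u2^4*d^8 + 1*u2^4*u4^2*d^6 + 3*u2^4*u3^2*d^6 + (-3)*u2^4*u3^2*u4^2*d^4 + (-3)*u2^4*u3^4*d^4 + 3*u2^4*u3^4*u4^2*d^2 + 1*u2^4*u3^6*d^2 + (-1)*u2^4*u3^6*u4^2) * hH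
  exact (mul_eq_zero.mp key).resolve_left hD

theorem stmt14 (a c nu d h1 : ℝ) (w : ℕ → ℝ)
    (hnz : ∀ n, (w n)^2 ≠ d^2)
    (hrec : ∀ n, w (n+4) * ((w (n+3))^2 - d^2) * ((w (n+2))^2 - d^2) + w n * ((w (n+1))^2 - d^2) * ((w (n+2))^2 - d^2) + w (n+2) * (((w (n+2))^2 - d^2) * (w (n+3) + w (n+1))^2 + c - d^4) + nu * ((w (n+2))^2 - d^2) * (w (n+3) + w (n+1)) + a = 0)
    (hH1 : ∀ n, H1vi a c nu d (w n) (w (n+1)) (w (n+2)) (w (n+3)) = h1) :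
    (∀ n, (fun m => (w (m+1) - d) * (w m + d)) (n+4) * (fun m => (w (m+1) - d) * (w m + d)) (n+3) * (fun m => (w (m+1) - d) * (w m + d)) (n+2) + (fun m => (w (m+1) - d) * (w m + d)) (n+2) * (fun m => (w (m+1) - d) * (w m + d)) (n+1) * (fun m => (w (m+1) - d) * (w m + d)) n + 2 * ((fun m => (w (m+1) - d) * (w m + d)) (n+2))^2 * ((fun m => (w (m+1) - d) * (w m + d)) (n+3) + (fun m => (w (m+1) - d) * (w m + d)) (n+1)) + ((fun m => (w (m+1) - d) * (w m + d)) (n+2))^3 + (fun m => (w (m+1) - d) * (w m + d)) (n+2) * (((fun m => (w (m+1) - d) * (w m + d)) (n+3))^2 + (fun m => (w (m+1) - d) * (w m + d)) (n+3) * (fun m => (w (m+1) - d) * (w m + d)) (n+1) + ((fun m => (w (m+1) - d) * (w m + d)) (n+1))^2) + (nu + 6*d^2) * (fun m => (w (m+1) - d) * (w m + d)) (n+2) * ((fun m => (w (m+1) - d) * (w m + d)) (n+3) + (fun m => (w (m+1) - d) * (w m + d)) (n+2) + (fun m => (w (m+1) - d) * (w m + d)) (n+1)) + (c + 4*nu*d^2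 + 7*d^4) * (fun m => (w (m+1) - d) * (w m + d)) (n+2) + (h1 + c*d^2 + nu*d^4 - d^6) = 0) ∧
    (∀ n, (fun m => (w (m+1) + d) * (w m - d)) (n+4) * (fun m => (w (m+1) + d) * (w m - d)) (n+3) * (fun m => (w (m+1) + d) * (w m - d)) (n+2) + (fun m => (w (m+1) + d) * (w m - d)) (n+2) * (fun m => (w (m+1) + d) * (w m - d)) (n+1) * (fun m => (w (m+1) + d) * (w m - d)) n + 2 * ((fun m => (w (m+1) + d) * (w m - d)) (n+2))^2 * ((fun m => (w (m+1) + d) * (w m - d)) (n+3) + (fun m => (w (m+1) + d) * (w m - d)) (n+1)) + ((fun m => (w (m+1) + d) * (w m - d)) (n+2))^3 + (fun m => (w (m+1) + d) * (w m - d)) (n+2) * (((fun m => (w (m+1) + d) * (w m - d)) (n+3))^2 + (fun m => (w (m+1) + d) * (w m - d)) (n+3) * (fun m => (w (m+1) + d) * (w m - d)) (n+1) + ((fun m => (w (m+1) + d) * (w m - d)) (n+1))^2) + (nu + 6*d^2) * (fun m => (w (m+1) + d) * (w m - d)) (n+2) * ((fun m => (w (m+1) + d) * (w m - d)) (n+3)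 + (fun m => (w (m+1) + d) * (w m - d)) (n+2) + (fun m => (w (m+1) + d) * (w m - d)) (n+1)) + (c + 4*nu*d^2 + 7*d^4) * (fun m => (w (m+1) + d) * (w m - d)) (n+2) + (h1 + c*d^2 + nu*d^4 - d^6) = 0) := by
  constructor
  · intro n
    have := auxP (a:=a) (c:=c) (nu:=nu) (d:=d) (h1:=h1) (u0:=w n) (u1:=w (n+1)) (u2:=w (n+2)) (u3:=w (n+3)) (u4:=w (n+4)) (u5:=w (n+5)) (hnz (n+2)) (hnz (n+3)) (hnz (n+4)) (hrec n) (hrec (n+1)) (hH1 (n+1))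
    linear_combination this
  · intro n
    have := auxM (a:=a) (c:=c) (nu:=nu) (d:=d) (h1:=h1) (u0:=w n) (u1:=w (n+1)) (u2:=w (n+2)) (u3:=w (n+3)) (u4:=w (n+4)) (u5:=w (n+5)) (hnz (n+2)) (hnz (n+3)) (hnz (n+4)) (hrec n) (hrec (n+1)) (hH1 (n+1))
    linear_combination this
end
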